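/- There is a constant c > 0 depending only on L with the following property: for every twice continuously differentiable w : AddCircle L → ℂ, every f, v ∈ L²(AddCircle L), every μ ≥ 0, and all R₀, R₁ > 0 with ‖w‖ ≤ R₀ and ‖w‖_{H¹} ≤ R₁, one has ‖w_xx‖² − 2∫₀^L |w|²|w_x|² − Re ∫₀^L w²·(conj(w_x))² − 2 Re ∫₀^L f·conj(w_xx) + 2μ Im ∫₀^L v·conj(w_xx) ≥ (1/2)‖w_xx‖² − c(R₀R₁³ + ‖f‖² + μ²‖v‖²). -/

import Mathlib

open MeasureTheory Finset

/-- The `L²` norm `(∫₀^L ‖g x‖² dx)^{1/2}` of a function on the circle `AddCircle L`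
(recall that the standard measure on `AddCircle L` has total mass `L`). -/
noncomputable def l2norm (L : ℝ) [Fact (0 < L)] (g : AddCircle L → ℂ) : ℝ :=
  Real.sqrt (∫ x : AddCircle L, ‖g x‖ ^ 2)

/-- The trigonometric polynomial `x ↦ ∑_{|k| ≤ N} c k · e^{2πikx/L}` on `AddCircle L`. -/
noncomputable def trigSum (L : ℝ) (N : ℕ) (c : ℤ → ℂ) : AddCircle L → ℂ :=
  fun x => ∑ k ∈ Finset.Icc (-(N : ℤ)) (N : ℤ), c k * fourier k x

/-- The low-mode Fourier projection `P_N g = ∑_{|k| ≤ N} ĝ(k) e^{2πikx/L}`. -/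
noncomputable def lowProj (L : ℝ) [Fact (0 < L)] (N : ℕ) (g : AddCircle L → ℂ) :
    AddCircle L → ℂ :=
  trigSum L N (fun k => fourierCoeff g k)

/-!
The quartic terms are controlled by Agmon's inequality
`‖w‖_∞² ≤ ‖w‖²/L + 2‖w‖‖w_x‖`, obtained by integrating `(|w|²)' = 2 Re(w conj w_x)` from a
minimum point of `|w|²`, where `|w|²` is at most its mean. With `‖w‖ ≤ R₀` and
`‖w‖, ‖w_x‖ ≤ R₁` this gives `∫|w|²|w_x|² ≤ (1/L + 2) R₀R₁³`, and the real part of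
`∫ w² conj(w_x)²` is bounded by the same integral. The forcing terms are bounded by
Cauchy–Schwarz and absorbed into half of `‖w_xx‖²` by Young's inequality
`2xy ≤ x²/4 + 4y²`; one may take `c = 3(1/L + 2)`.
-/

open Set intervalIntegral Filter
open scoped Interval

theorem sq_norm_le_integral_of_hasDerivAt {E : Type*} [NormedAddCommGroup E]
    [InnerProductSpace ℝ E] {F F' : ℝ → E} {a b s : ℝ} (hab : a < b)
    (hF : ∀ t ∈ Icc a b, HasDerivAt F (F' t) t) (hF' : ContinuousOn F' (Icc a b))
    (hs : s ∈ Icc a b) :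
    ‖F s‖ ^ 2 ≤ (∫ t in a..b, ‖F t‖ ^ 2) / (b - a) + 2 * ∫ t in a..b, ‖F t‖ * ‖F' t‖ := by
  have hFc : ContinuousOn F (Icc a b) := fun t ht => (hF t ht).continuousAt.continuousWithinAt
  have hGc : ContinuousOn (fun t => ‖F t‖ ^ 2) (Icc a b) := hFc.norm.pow 2
  obtain ⟨y, hy, hmin⟩ := isCompact_Icc.exists_isMinOn (nonempty_Icc.mpr hab.le) hGc
  have hmean : ‖F y‖ ^ 2 ≤ (∫ t in a..b, ‖F t‖ ^ 2) / (b - a) := by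
    rw [le_div_iff₀ (sub_pos.mpr hab), mul_comm]
    simpa using integral_mono_on (μ := volume) hab.le intervalIntegrable_const
      (hGc.intervalIntegrable_of_Icc hab.le) fun t ht => hmin ht
  have hsub : [[y, s]] ⊆ Icc a b := uIcc_subset_Icc hy hs
  have hG'c : ContinuousOn (fun t => 2 * inner ℝ (F t) (F' t)) [[y, s]] :=
    continuousOn_const.mul ((hFc.mono hsub).inner (hF'.mono hsub))
  have hFTC : ∫ t in y..s, 2 * inner ℝ (F t) (F' t) = ‖F s‖ ^ 2 - ‖F y‖ ^ 2 :=
    integral_eq_sub_of_hasDerivAt (fun t ht => (hF t (hsub ht)).norm_sq)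
      hG'c.intervalIntegrable
  have hvar : ‖F s‖ ^ 2 - ‖F y‖ ^ 2 ≤ ∫ t in a..b, 2 * (‖F t‖ * ‖F' t‖) := by
    have hIoc : Ι y s ⊆ Ioc a b := by
      simpa [uIoc_of_le hab.le] using
        uIoc_subset_uIoc_of_uIcc_subset_uIcc (hsub.trans (uIcc_of_le hab.le).symm.subset)
    have hint : IntegrableOn (fun t => 2 * (‖F t‖ * ‖F' t‖)) (Ioc a b) :=
      (continuousOn_const.mul (hFc.norm.mul hF'.norm)).integrableOn_Icc.mono_set
        Ioc_subset_Icc_self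
    rw [← hFTC, integral_of_le hab.le]
    calc ∫ t in y..s, 2 * inner ℝ (F t) (F' t)
        ≤ ‖∫ t in y..s, 2 * inner ℝ (F t) (F' t)‖ := Real.le_norm_self _
      _ ≤ ∫ t in Ι y s, ‖2 * inner ℝ (F t) (F' t)‖ := norm_integral_le_integral_norm_uIoc
      _ ≤ ∫ t in Ι y s, 2 * (‖F t‖ * ‖F' t‖) := by
          refine setIntegral_mono_on ?_ (hint.mono_set hIoc) measurableSet_uIoc fun t _ => ?_
          · exact hG'c.norm.integrableOn_uIcc.mono_set uIoc_subset_uIcc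
          · rw [norm_mul, Real.norm_two, Real.norm_eq_abs]
            gcongr
            exact abs_real_inner_le_norm _ _
      _ ≤ ∫ t in Ioc a b, 2 * (‖F t‖ * ‖F' t‖) :=
          setIntegral_mono_set hint (Eventually.of_forall fun t => by positivity)
            (Eventually.of_forall hIoc)
  rw [intervalIntegral.integral_const_mul] at hvar
  linarith

lemma continuous_of_hasDerivAt_comp_coe {L : ℝ} {E : Type*} [NormedAddCommGroup E]
    [NormedSpace ℝ E] {w w' : AddCircle L → E}
    (hw : ∀ t : ℝ, HasDerivAt (fun τ : ℝ => w τ) (w' t) t) : Continuous w :=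
  (QuotientAddGroup.isQuotientMap_mk _).continuous_iff.mpr <|
    continuous_iff_continuousAt.mpr fun t => (hw t).continuousAt

variable {L : ℝ} [Fact (0 < L)]

lemma memLp_of_continuous {E : Type*} [NormedAddCommGroup E] {p : ENNReal}
    {g : AddCircle L → E} (hg : Continuous g) : MemLp g p :=
  hg.memLp_of_hasCompactSupport (HasCompactSupport.of_compactSpace g)

lemma l2norm_sq (g : AddCircle L → ℂ) : l2norm L g ^ 2 = ∫ x, ‖g x‖ ^ 2 :=
  Real.sq_sqrt (integral_nonneg fun _ => sq_nonneg _)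

lemma integral_norm_mul_norm_le_l2norm {f g : AddCircle L → ℂ} (hf : MemLp f 2)
    (hg : MemLp g 2) : ∫ x, ‖f x‖ * ‖g x‖ ≤ l2norm L f * l2norm L g := by
  have h := integral_mul_norm_le_Lp_mul_Lq (μ := volume) Real.HolderConjugate.two_two
    (by simpa using hf) (by simpa using hg)
  simpa [l2norm, Real.sqrt_eq_rpow] using h

lemma norm_integral_mul_conj_le_l2norm {f g : AddCircle L → ℂ} (hf : MemLp f 2)
    (hg : MemLp g 2) : ‖∫ x, f x * starRingEnd ℂ (g x)‖ ≤ l2norm L f * l2norm L g :=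
  calc ‖∫ x, f x * starRingEnd ℂ (g x)‖ ≤ ∫ x, ‖f x * starRingEnd ℂ (g x)‖ :=
        norm_integral_le_integral_norm _
    _ = ∫ x, ‖f x‖ * ‖g x‖ := by simp only [norm_mul, RCLike.norm_conj]
    _ ≤ l2norm L f * l2norm L g := integral_norm_mul_norm_le_l2norm hf hg

theorem sq_norm_le_l2norm_of_hasDerivAt {w w' : AddCircle L → ℂ}
    (hw : ∀ t : ℝ, HasDerivAt (fun τ : ℝ => w τ) (w' t) t) (hw' : Continuous w')
    (x : AddCircle L) :
    ‖w x‖ ^ 2 ≤ l2norm L w ^ 2 / L + 2 * (l2norm L w * l2norm L w') := by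
  have hL : 0 < L := Fact.out
  have hcircle (h : AddCircle L → ℝ) : ∫ t in 0..L, h t = ∫ x, h x := by
    simpa using AddCircle.intervalIntegral_preimage L 0 h
  have hx := Ico_subset_Icc_self (AddCircle.equivIco L 0 x).2
  have h := sq_norm_le_integral_of_hasDerivAt (F' := fun t : ℝ => w' t) hL (fun t _ => hw t)
    (hw'.comp continuous_quotient_mk').continuousOn (by simpa using hx)
  rw [AddCircle.coe_equivIco, sub_zero, hcircle (fun x => ‖w x‖ ^ 2),
    hcircle (fun x => ‖w x‖ * ‖w' x‖), ← l2norm_sq] at h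
  have hprod := integral_norm_mul_norm_le_l2norm
    (memLp_of_continuous (continuous_of_hasDerivAt_comp_coe hw)) (memLp_of_continuous hw')
  linarith

theorem integral_sq_mul_sq_le_l2norm {w w' : AddCircle L → ℂ}
    (hw : ∀ t : ℝ, HasDerivAt (fun τ : ℝ => w τ) (w' t) t) (hw' : Continuous w') :
    ∫ x, ‖w x‖ ^ 2 * ‖w' x‖ ^ 2
      ≤ (l2norm L w ^ 2 / L + 2 * (l2norm L w * l2norm L w')) * l2norm L w' ^ 2 := by
  have hwc := continuous_of_hasDerivAt_comp_coe hw
  rw [l2norm_sq w', ← MeasureTheory.integral_const_mul]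
  refine integral_mono ?_ ?_ fun x =>
    mul_le_mul_of_nonneg_right (sq_norm_le_l2norm_of_hasDerivAt hw hw' x) (sq_nonneg _)
  · exact ((hwc.norm.pow 2).mul (hw'.norm.pow 2)).integrable_of_hasCompactSupport
      (HasCompactSupport.of_compactSpace _)
  · exact (continuous_const.mul (hw'.norm.pow 2)).integrable_of_hasCompactSupport
      (HasCompactSupport.of_compactSpace _)

lemma abs_re_integral_sq_mul_conj_sq_le (w w' : AddCircle L → ℂ) :
    |(∫ x, w x ^ 2 * starRingEnd ℂ (w' x) ^ 2).re| ≤ ∫ x, ‖w x‖ ^ 2 * ‖w' x‖ ^ 2 :=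
  calc |(∫ x, w x ^ 2 * starRingEnd ℂ (w' x) ^ 2).re|
      ≤ ‖∫ x, w x ^ 2 * starRingEnd ℂ (w' x) ^ 2‖ := Complex.abs_re_le_norm _
    _ ≤ ∫ x, ‖w x ^ 2 * starRingEnd ℂ (w' x) ^ 2‖ := norm_integral_le_integral_norm _
    _ = ∫ x, ‖w x‖ ^ 2 * ‖w' x‖ ^ 2 := by simp only [norm_mul, norm_pow, RCLike.norm_conj]

theorem integral_sq_mul_sq_le_of_l2norm_le {w w' : AddCircle L → ℂ}
    (hw : ∀ t : ℝ, HasDerivAt (fun τ : ℝ => w τ) (w' t) t) (hw' : Continuous w') {R₀ R₁ : ℝ}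
    (hR₀ : l2norm L w ≤ R₀) (hR₁ : √(l2norm L w ^ 2 + l2norm L w' ^ 2) ≤ R₁) :
    ∫ x, ‖w x‖ ^ 2 * ‖w' x‖ ^ 2 ≤ (L⁻¹ + 2) * (R₀ * R₁ ^ 3) := by
  set a := l2norm L w
  set b := l2norm L w'
  have ha : 0 ≤ a := Real.sqrt_nonneg _
  have hb : 0 ≤ b := Real.sqrt_nonneg _
  have haR₁ : a ≤ R₁ := (Real.le_sqrt_of_sq_le (by linarith [sq_nonneg b])).trans hR₁
  have hbR₁ : b ≤ R₁ := (Real.le_sqrt_of_sq_le (by linarith [sq_nonneg a])).trans hR₁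
  have hR₀' : 0 ≤ R₀ := ha.trans hR₀
  have hR₁' : 0 ≤ R₁ := ha.trans haR₁
  have haa : a ^ 2 ≤ R₀ * R₁ := by rw [sq]; exact mul_le_mul hR₀ haR₁ ha hR₀'
  have hab : a * b ≤ R₀ * R₁ := mul_le_mul hR₀ hbR₁ hb hR₀'
  have hL : 0 < L := Fact.out
  calc ∫ x, ‖w x‖ ^ 2 * ‖w' x‖ ^ 2 ≤ (a ^ 2 / L + 2 * (a * b)) * b ^ 2 :=
        integral_sq_mul_sq_le_l2norm hw hw'
    _ ≤ (R₀ * R₁ / L + 2 * (R₀ * R₁)) * R₁ ^ 2 := by gcongr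
    _ = (L⁻¹ + 2) * (R₀ * R₁ ^ 3) := by ring

/-- lower bound for the functional `φ̂`: there is `c > 0` depending only on
`L` such that for every twice continuously differentiable `w`, every `f, v ∈ L²`, every
`μ ≥ 0`, and all `R₀, R₁ > 0` with `‖w‖ ≤ R₀` and `‖w‖_{H¹} ≤ R₁`:
`‖w_xx‖² - 2∫|w|²|w_x|² - Re ∫ w²(conj w_x)² - 2 Re ∫ f conj(w_xx) + 2μ Im ∫ v conj(w_xx)
  ≥ (1/2)‖w_xx‖² - c(R₀R₁³ + ‖f‖² + μ²‖v‖²)`. -/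
theorem varphi_lower_bound (L : ℝ) [Fact (0 < L)] :
    ∃ c : ℝ, 0 < c ∧ ∀ (w w' w'' : AddCircle L → ℂ),
      (∀ t : ℝ, HasDerivAt (fun τ : ℝ => w (τ : AddCircle L)) (w' (t : AddCircle L)) t) →
      (∀ t : ℝ, HasDerivAt (fun τ : ℝ => w' (τ : AddCircle L)) (w'' (t : AddCircle L)) t) →
      Continuous w'' →
      ∀ (f v : AddCircle L → ℂ), MemLp f 2 → MemLp v 2 →
      ∀ (μ R₀ R₁ : ℝ), 0 ≤ μ → 0 < R₀ → 0 < R₁ →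
      l2norm L w ≤ R₀ → Real.sqrt ((l2norm L w) ^ 2 + (l2norm L w') ^ 2) ≤ R₁ →
      (l2norm L w'') ^ 2 - 2 * (∫ x : AddCircle L, ‖w x‖ ^ 2 * ‖w' x‖ ^ 2)
          - (∫ x : AddCircle L, (w x) ^ 2 * ((starRingEnd ℂ) (w' x)) ^ 2).re
          - 2 * (∫ x : AddCircle L, f x * (starRingEnd ℂ) (w'' x)).re
          + 2 * μ * (∫ x : AddCircle L, v x * (starRingEnd ℂ) (w'' x)).im
        ≥ (1 / 2) * (l2norm L w'') ^ 2
          - c * (R₀ * R₁ ^ 3 + (l2norm L f) ^ 2 + μ ^ 2 * (l2norm L v) ^ 2) := by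
  have hL : 0 < L := Fact.out
  refine ⟨3 * (L⁻¹ + 2), by positivity, ?_⟩
  intro w w' w'' hw hw' hw'' f v hf hv μ R₀ R₁ hμ _ _ hR₀ hR₁
  have hw''2 : MemLp w'' 2 := memLp_of_continuous hw''
  have hquartic := integral_sq_mul_sq_le_of_l2norm_le hw
    (continuous_of_hasDerivAt_comp_coe hw') hR₀ hR₁
  have hre := le_of_abs_le (abs_re_integral_sq_mul_conj_sq_le w w')
  have hf' := (Complex.re_le_norm _).trans (norm_integral_mul_conj_le_l2norm hf hw''2)
  have hv' := mul_le_mul_of_nonneg_left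
    (neg_le_of_abs_le ((Complex.abs_im_le_norm _).trans
      (norm_integral_mul_conj_le_l2norm hv hw''2))) (by positivity : 0 ≤ 2 * μ)
  set A := l2norm L w''
  set Nf := l2norm L f
  set Nv := l2norm L v
  have hyf : 2 * (Nf * A) ≤ A ^ 2 / 4 + 4 * Nf ^ 2 := by linarith [sq_nonneg (A / 2 - 2 * Nf)]
  have hyv : 2 * μ * (Nv * A) ≤ A ^ 2 / 4 + 4 * (μ ^ 2 * Nv ^ 2) := by
    linarith [sq_nonneg (A / 2 - 2 * (μ * Nv))]
  have hNf : 0 ≤ L⁻¹ * Nf ^ 2 := by positivity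
  have hNv : 0 ≤ L⁻¹ * (μ ^ 2 * Nv ^ 2) := by positivity
  linarith [sq_nonneg Nf, mul_nonneg (sq_nonneg μ) (sq_nonneg Nv)]
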